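/- arXiv:math/0110010 — 2 statements merged into one kernel-verified Lean document; each statement's English description precedes it below -/
import Mathlib

section
/- For every non-negative integer k, every real α > -1, and every real y, the k-th derivative with respect to u of the function u ↦ u^(-α-1) · exp(-y/u) (for u > 0) satisfies ((-1)^k / k!) · d^k/du^k (u^(-α-1) · e^(-y/u)) = u^(-α-1-k) · e^(-y/u) · L_k^α(y/u), where L_k^α is the generalized Laguerre polynomial of degree k and parameter α. -/
open MeasureTheory Real Filter

noncomputable def laguerre (α : ℝ) (k : ℕ) (x : ℝ) : ℝ :=
  ∑ j ∈ Finset.range (k + 1),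
    (-1 : ℝ) ^ j *
      (Real.Gamma (k + α + 1) /
        (Real.Gamma (j + α + 1) * (Nat.factorial (k - j)) * (Nat.factorial j))) * x ^ j

noncomputable def besselJ (ν x : ℝ) : ℝ :=
  ∑' m : ℕ, ((-1 : ℝ) ^ m / (Nat.factorial m * Real.Gamma (m + ν + 1))) *
    (x / 2) ^ (2 * (m : ℝ) + ν)

noncomputable def besselKernel (α t : ℝ) : ℝ :=
  if t = 0 then 1 / Real.Gamma (α + 1) else t ^ (-(α / 2)) * besselJ α (2 * Real.sqrt t)

noncomputable def LaguerreCoeff (α : ℝ) (f : ℝ → ℝ) (j : ℕ) (y : ℝ) : ℝ :=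
  ((Nat.factorial j : ℝ) / Real.Gamma (j + α + 1)) *
    ∫ x in Set.Ioi (0 : ℝ), f (x / y) * laguerre α j x * x ^ α * Real.exp (-x)

def SILP (α : ℝ) (f : ℝ → ℝ) : Prop :=
  ContinuousOn f (Set.Ici 0) ∧
  (∃ C > (0 : ℝ), ∃ ε > (0 : ℝ), ∀ x ≥ (0 : ℝ), |f x| ≤ C * (1 + x) ^ (-(α + 1 + ε))) ∧
  (∀ y > (0 : ℝ), ∀ j : ℕ, 0 ≤ LaguerreCoeff α f j y)

/-!
With `G_k(u) = u^(-α-1-k) e^(-y/u) L_k^α(y/u)`, the function being differentiated is `G_0`.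
The identity `(k+1) L_{k+1}^α(x) = (k+α+1-x) L_k^α(x) + x (L_k^α)'(x)`, checked coefficientwise
from `Γ(z+1) = z Γ(z)`, turns the product and chain rules into `G_k' = -(k+1) G_{k+1}`;
hence the `k`-th derivative of `G_0` is `(-1)^k k! G_k`.
-/

noncomputable def laguerrePolyCoeff (α : ℝ) (k j : ℕ) : ℝ :=
  (-1 : ℝ) ^ j *
    (Real.Gamma (k + α + 1) /
      (Real.Gamma (j + α + 1) * (Nat.factorial (k - j)) * (Nat.factorial j)))

lemma laguerre_eq_sum (α : ℝ) (k : ℕ) (x : ℝ) :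
    laguerre α k x = ∑ j ∈ Finset.range (k + 1), laguerrePolyCoeff α k j * x ^ j := rfl

lemma nat_add_add_one_pos {α : ℝ} (hα : -1 < α) (j : ℕ) : 0 < (j : ℝ) + α + 1 := by
  linarith [(Nat.cast_nonneg j : (0 : ℝ) ≤ j)]

lemma Gamma_nat_add_pos {α : ℝ} (hα : -1 < α) (j : ℕ) : 0 < Real.Gamma (j + α + 1) :=
  Real.Gamma_pos_of_pos (nat_add_add_one_pos hα j)

lemma Gamma_nat_succ_add {α : ℝ} (hα : -1 < α) (j : ℕ) :
    Real.Gamma ((j + 1 : ℕ) + α + 1) = (j + α + 1) * Real.Gamma (j + α + 1) := by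
  rw [← Real.Gamma_add_one (nat_add_add_one_pos hα j).ne']
  push_cast
  ring_nf

lemma laguerrePolyCoeff_succ_left {α : ℝ} (hα : -1 < α) {k j : ℕ} (hj : j ≤ k) :
    ((k : ℝ) + 1 - j) * laguerrePolyCoeff α (k + 1) j =
      (k + α + 1) * laguerrePolyCoeff α k j := by
  have hfac : ((k + 1 - j).factorial : ℝ) = ((k : ℝ) + 1 - j) * (k - j).factorial := by
    rw [Nat.succ_sub hj, Nat.factorial_succ]
    push_cast [Nat.cast_sub hj]
    ring
  have hkj : (k : ℝ) + 1 - j ≠ 0 := by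
    have : (j : ℝ) ≤ k := by exact_mod_cast hj
    linarith
  have := Gamma_nat_add_pos hα j
  unfold laguerrePolyCoeff
  rw [hfac, Gamma_nat_succ_add hα]
  field_simp

lemma laguerrePolyCoeff_succ_right {α : ℝ} (hα : -1 < α) {k j : ℕ} (hj : j < k) :
    ((j : ℝ) + α + 1) * (j + 1) * laguerrePolyCoeff α k (j + 1) =
      -((k : ℝ) - j) * laguerrePolyCoeff α k j := by
  have hfac : ((k - j).factorial : ℝ) = ((k : ℝ) - j) * (k - (j + 1)).factorial := by
    rw [show k - j = k - (j + 1) + 1 by omega, Nat.factorial_succ]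
    push_cast [Nat.cast_sub hj]
    ring
  have := Gamma_nat_add_pos hα j
  have := (nat_add_add_one_pos hα j).ne'
  have hkj : (k : ℝ) - j ≠ 0 := by
    have : (j : ℝ) < k := by exact_mod_cast hj
    linarith
  unfold laguerrePolyCoeff
  rw [hfac, Gamma_nat_succ_add hα, Nat.factorial_succ]
  push_cast
  field_simp
  ring

lemma laguerrePolyCoeff_succ_diag {α : ℝ} (hα : -1 < α) (k : ℕ) :
    ((k : ℝ) + 1) * laguerrePolyCoeff α (k + 1) (k + 1) = -laguerrePolyCoeff α k k := by
  have := Gamma_nat_add_pos hα k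
  have := (nat_add_add_one_pos hα k).ne'
  unfold laguerrePolyCoeff
  rw [Nat.sub_self, Nat.sub_self, Gamma_nat_succ_add hα, Nat.factorial_succ]
  push_cast
  field_simp
  ring

lemma laguerrePolyCoeff_succ_succ {α : ℝ} (hα : -1 < α) {k m : ℕ} (hm : m < k) :
    ((k : ℝ) + 1) * laguerrePolyCoeff α (k + 1) (m + 1) =
      ((k : ℝ) + α + (m + 1) + 1) * laguerrePolyCoeff α k (m + 1) -
        laguerrePolyCoeff α k m := by
  have hleft := laguerrePolyCoeff_succ_left hα (Nat.succ_le_of_lt hm)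
  have hright := laguerrePolyCoeff_succ_right hα hm
  have hkm : (k : ℝ) - m ≠ 0 := sub_ne_zero.mpr (by exact_mod_cast hm.ne')
  push_cast at hleft
  apply mul_left_cancel₀ hkm
  linear_combination ((k : ℝ) + 1) * hleft + hright

lemma hasDerivAt_laguerre (α : ℝ) (k : ℕ) (x : ℝ) :
    HasDerivAt (laguerre α k)
      (∑ j ∈ Finset.range (k + 1), laguerrePolyCoeff α k j * (j * x ^ (j - 1))) x := by
  simp_rw [funext (laguerre_eq_sum α k)]
  exact HasDerivAt.fun_sum fun j _ => (hasDerivAt_pow j x).const_mul _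

lemma mul_deriv_laguerre (α : ℝ) (k : ℕ) (x : ℝ) :
    x * deriv (laguerre α k) x =
      ∑ j ∈ Finset.range (k + 1), j * laguerrePolyCoeff α k j * x ^ j := by
  rw [(hasDerivAt_laguerre α k x).deriv, Finset.mul_sum]
  refine Finset.sum_congr rfl fun j _ => ?_
  rcases j with _ | j
  · simp
  · rw [Nat.add_sub_cancel, pow_succ]
    ring

lemma succ_mul_laguerre_succ {α : ℝ} (hα : -1 < α) (k : ℕ) (x : ℝ) :
    ((k : ℝ) + 1) * laguerre α (k + 1) x =
      ((k : ℝ) + α + 1 - x) * laguerre α k x + x * deriv (laguerre α k) x := by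
  set c := laguerrePolyCoeff α
  have hrhs : ((k : ℝ) + α + 1 - x) * laguerre α k x + x * deriv (laguerre α k) x =
      ∑ j ∈ Finset.range (k + 1), ((k : ℝ) + α + j + 1) * c k j * x ^ j -
        ∑ j ∈ Finset.range (k + 1), c k j * x ^ (j + 1) := by
    rw [mul_deriv_laguerre, laguerre_eq_sum, Finset.mul_sum, ← Finset.sum_add_distrib,
      ← Finset.sum_sub_distrib]
    exact Finset.sum_congr rfl fun j _ => by ring
  have hmid : ∑ m ∈ Finset.range k, ((k : ℝ) + 1) * (c (k + 1) (m + 1) * x ^ (m + 1)) =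
      ∑ m ∈ Finset.range k, (((k : ℝ) + α + (m + 1 : ℕ) + 1) * c k (m + 1) * x ^ (m + 1) -
        c k m * x ^ (m + 1)) := by
    refine Finset.sum_congr rfl fun m hm => ?_
    rw [← mul_assoc, laguerrePolyCoeff_succ_succ hα (Finset.mem_range.mp hm)]
    push_cast
    ring
  rw [hrhs, laguerre_eq_sum, Finset.mul_sum, Finset.sum_range_succ', Finset.sum_range_succ,
    hmid, Finset.sum_sub_distrib, Finset.sum_range_succ' _ k, Finset.sum_range_succ _ k]
  have hzero := laguerrePolyCoeff_succ_left hα (Nat.zero_le k)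
  have hdiag := laguerrePolyCoeff_succ_diag hα k
  push_cast at hzero ⊢
  linear_combination x ^ (k + 1) * hdiag + hzero

noncomputable def scaledLaguerre (α y : ℝ) (k : ℕ) (u : ℝ) : ℝ :=
  u ^ (-α - 1 - k) * Real.exp (-y / u) * laguerre α k (y / u)

lemma hasDerivAt_scaledLaguerre {α : ℝ} (hα : -1 < α) (y : ℝ) (k : ℕ) {u : ℝ}
    (hu : u ≠ 0) :
    HasDerivAt (scaledLaguerre α y k) (-((k : ℝ) + 1) * scaledLaguerre α y (k + 1) u) u := by
  have hpow : HasDerivAt (fun v : ℝ => v ^ (-α - 1 - k))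
      ((-α - 1 - k) * u ^ (-α - 1 - k - 1)) u :=
    Real.hasDerivAt_rpow_const (Or.inl hu)
  have hinv : HasDerivAt (fun v : ℝ => y / v) (-(y / u ^ 2)) u := by
    simpa [div_eq_mul_inv] using (hasDerivAt_inv hu).const_mul y
  have hexp : HasDerivAt (fun v : ℝ => Real.exp (-y / v))
      (Real.exp (-y / u) * (y / u ^ 2)) u := by
    simpa [div_eq_mul_inv] using ((hasDerivAt_inv hu).const_mul (-y)).exp
  have hlag : HasDerivAt (fun v : ℝ => laguerre α k (y / v))
      (deriv (laguerre α k) (y / u) * -(y / u ^ 2)) u :=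
    (hasDerivAt_laguerre α k (y / u)).differentiableAt.hasDerivAt.comp u hinv
  refine ((hpow.fun_mul hexp).fun_mul hlag).congr_deriv ?_
  have hrec := succ_mul_laguerre_succ hα k (y / u)
  have hsplit : u ^ (-α - 1 - k) = u ^ (-α - 1 - k - 1) * u := by
    rw [← Real.rpow_add_one hu, sub_add_cancel]
  have hx : u * (y / u ^ 2) = y / u := by field_simp
  unfold scaledLaguerre
  rw [show -α - 1 - ((k + 1 : ℕ) : ℝ) = -α - 1 - k - 1 by push_cast; ring, hsplit]
  linear_combination u ^ (-α - 1 - k - 1) * Real.exp (-y / u) *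
    (hrec + (laguerre α k (y / u) - deriv (laguerre α k) (y / u)) * hx)

lemma laguerre_zero {α : ℝ} (hα : -1 < α) (x : ℝ) : laguerre α 0 x = 1 := by
  have := (Gamma_nat_add_pos hα 0).ne'
  simp_all [laguerre_eq_sum, laguerrePolyCoeff]

lemma scaledLaguerre_zero {α : ℝ} (hα : -1 < α) (y : ℝ) :
    scaledLaguerre α y 0 = fun v => v ^ (-α - 1) * Real.exp (-y / v) := by
  ext v
  simp [scaledLaguerre, laguerre_zero hα]

lemma iteratedDerivWithin_rpow_mul_exp {α : ℝ} (hα : -1 < α) (y : ℝ) (n : ℕ) {v : ℝ}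
    (hv : 0 < v) :
    iteratedDerivWithin n (fun v : ℝ => v ^ (-α - 1) * Real.exp (-y / v)) (Set.Ioi 0) v =
      (-1) ^ n * n.factorial * scaledLaguerre α y n v := by
  induction n generalizing v with
  | zero => simp [scaledLaguerre_zero hα]
  | succ n ih =>
    rw [iteratedDerivWithin_succ, derivWithin_congr (fun _ hw => ih (Set.mem_Ioi.mp hw)) (ih hv),
      ((hasDerivAt_scaledLaguerre hα y n hv.ne').const_mul _).hasDerivWithinAt.derivWithin
        (isOpen_Ioi.uniqueDiffWithinAt hv), Nat.factorial_succ]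
    push_cast
    ring

theorem laguerre_rodrigues_laplace (k : ℕ) (α : ℝ) (hα : -1 < α) (y u : ℝ) (hu : 0 < u) :
    ((-1 : ℝ) ^ k / (Nat.factorial k : ℝ)) *
        iteratedDerivWithin k (fun v : ℝ => v ^ (-α - 1) * Real.exp (-y / v)) (Set.Ioi 0) u =
      u ^ (-α - 1 - k) * Real.exp (-y / u) * laguerre α k (y / u) := by
  rw [iteratedDerivWithin_rpow_mul_exp hα y k hu, scaledLaguerre]
  have : (k.factorial : ℝ) ≠ 0 := by positivity
  field_simp
  rw [← pow_mul, pow_mul', neg_one_sq, one_pow, one_mul]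
end

section
/- For any complex numbers z_1, …, z_n, the inequality |Im √(z_1² + ⋯ + z_n²)| ≤ √((Im z_1)² + ⋯ + (Im z_n)²) holds, where √ denotes any branch of the complex square root (both branches give the same absolute value of the imaginary part). -/
/-!
The function `u ↦ ‖u‖ - re u` takes the value `2 (Im z)²` at `u = z²` and is subadditive by the
triangle inequality. Applied to `w² = ∑ zᵢ²` this gives `2 (Im w)² ≤ ∑ 2 (Im zᵢ)²`.
-/

namespace Complex

theorem norm_sq_sub_re_sq (z : ℂ) : ‖z ^ 2‖ - (z ^ 2).re = 2 * z.im ^ 2 := by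
  rw [norm_pow, Complex.sq_norm, normSq_apply, sq, mul_re]
  ring

theorem norm_sum_sub_re_sum_le {ι : Type*} (s : Finset ι) (u : ι → ℂ) :
    ‖∑ i ∈ s, u i‖ - (∑ i ∈ s, u i).re ≤ ∑ i ∈ s, (‖u i‖ - (u i).re) := by
  rw [Finset.sum_sub_distrib, re_sum]
  linarith [norm_sum_le s u]

theorem im_sq_le_sum_im_sq_of_sq_eq_sum_sq {ι : Type*} (s : Finset ι) (z : ι → ℂ) {w : ℂ}
    (hw : w ^ 2 = ∑ i ∈ s, z i ^ 2) : w.im ^ 2 ≤ ∑ i ∈ s, (z i).im ^ 2 := by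
  have h := norm_sum_sub_re_sum_le s fun i ↦ z i ^ 2
  simp only [← hw, norm_sq_sub_re_sq, ← Finset.mul_sum] at h
  linarith

end Complex

theorem abs_im_sqrt_sum_sq_le (n : ℕ) (z : Fin n → ℂ) (w : ℂ)
    (hw : w ^ 2 = ∑ i, z i ^ 2) :
    |w.im| ≤ Real.sqrt (∑ i, (z i).im ^ 2) :=
  Real.abs_le_sqrt (Complex.im_sq_le_sum_im_sq_of_sq_eq_sum_sq _ z hw)
end
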